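/- Let G = (V,E) be a finite simple undirected connected graph with ν̄_G ≥ 0. Then ν̄_G = |V| - ν₂(G) = |V| - τ₂(G), where ν₂(G) is the maximum size of a 2-matching of G and τ₂(G) is the minimum size of a 2-vertex cover of G. -/

import Mathlib

open Finset

variable {V : Type*}

/-- `N(T)`: the set of vertices adjacent to at least one vertex of `T`. -/
def nbhd [Fintype V] [DecidableEq V] (G : SimpleGraph V) [DecidableRel G.Adj]
    (T : Finset V) : Finset V :=
  Finset.univ.filter fun j => ∃ i ∈ T, G.Adj i j

/-- The vulnerability function `v_G(T) = |T| - |N(T)|`. -/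
def vuln [Fintype V] [DecidableEq V] (G : SimpleGraph V) [DecidableRel G.Adj]
    (T : Finset V) : ℤ :=
  (T.card : ℤ) - ((nbhd G T).card : ℤ)

/-- `S` is an independent set of `G`. -/
def IsIndepF (G : SimpleGraph V) (S : Finset V) : Prop :=
  ∀ i ∈ S, ∀ j ∈ S, ¬ G.Adj i j

/-- `w` is a 2-matching of `H`: weights `0`, `1` or `2` on the edges such that for every vertex
the sum of the weights of the incident edges is at most 2. -/
def IsTwoMatching {W : Type*} (H : SimpleGraph W) (w : Sym2 W → ℕ) : Prop :=
  (∀ e ∈ H.edgeSet, w e ≤ 2) ∧ ∀ v : W, ∑ᶠ e ∈ H.incidenceSet v, w e ≤ 2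

/-- `u` is a 2-vertex cover of `H`: weights `0`, `1` or `2` on the vertices such that for every
edge the sum of the weights of its endpoints is at least 2. -/
def IsTwoVertexCover {W : Type*} (H : SimpleGraph W) (u : W → ℕ) : Prop :=
  (∀ i, u i ≤ 2) ∧ ∀ i j, H.Adj i j → 2 ≤ u i + u j

/-!
For an independent set `S`, the 2-vertex cover that is `0` on `S`, `2` on `N(S)` and `1`
elsewhere has size `|V| - v_G(S)`, and double counting the weight at `S`, at `N(S)` and at the
remaining vertices shows that no 2-matching is larger. Conversely, the zero set `Z` of any
2-vertex cover is independent and the cover dominates the one built from `Z`, so it has size at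
least `|V| - ν̄_G`. Finally, every set `A`, independent or not, satisfies
`|A| - |N(A)| ≤ ν̄_G`, so Hall's theorem with `ν̄_G` dummy vertices sends all but `ν̄_G`
vertices `i` injectively to neighbours `g(i)`, and the edges `i g(i)` form a 2-matching of size
`|V| - ν̄_G`.
-/

section Vulnerability

variable [Fintype V] [DecidableEq V] {G : SimpleGraph V} [DecidableRel G.Adj]

@[simp]
lemma mem_nbhd {T : Finset V} {j : V} : j ∈ nbhd G T ↔ ∃ i ∈ T, G.Adj i j := by
  simp [nbhd]

lemma nbhd_mono {S T : Finset V} (h : S ⊆ T) : nbhd G S ⊆ nbhd G T := fun _ hj ↦ by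
  obtain ⟨i, hi, hij⟩ := mem_nbhd.1 hj
  exact mem_nbhd.2 ⟨i, h hi, hij⟩

@[simp]
lemma vuln_empty : vuln G ∅ = 0 := by
  simp [vuln, nbhd]

lemma IsIndepF.disjoint_nbhd {S : Finset V} (hS : IsIndepF G S) : Disjoint S (nbhd G S) :=
  disjoint_left.2 fun _ hjS hjN ↦
    let ⟨i, hiS, hij⟩ := mem_nbhd.1 hjN
    hS i hiS _ hjS hij

lemma isIndepF_filter_forall_not_adj (A : Finset V) :
    IsIndepF G (A.filter fun v ↦ ∀ u ∈ A, ¬ G.Adj u v) := by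
  intro i hi j hj hij
  exact (mem_filter.1 hj).2 i (mem_filter.1 hi).1 hij

/-- The discarded vertices all lie in `N(A)`, outside `N` of the kept ones. -/
lemma vuln_le_vuln_filter_forall_not_adj (A : Finset V) :
    vuln G A ≤ vuln G (A.filter fun v ↦ ∀ u ∈ A, ¬ G.Adj u v) := by
  set I := A.filter fun v ↦ ∀ u ∈ A, ¬ G.Adj u v
  have hIA : I ⊆ A := filter_subset _ _
  have hrest : A \ I ⊆ nbhd G A := fun v hv ↦ by
    obtain ⟨hvA, hvI⟩ := mem_sdiff.1 hv
    simp only [I, mem_filter, hvA, true_and, not_forall, not_not] at hvI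
    obtain ⟨u, huA, huv⟩ := hvI
    exact mem_nbhd.2 ⟨u, huA, huv⟩
  have hdisj : Disjoint (nbhd G I) (A \ I) := disjoint_left.2 fun v hvN hvA ↦ by
    obtain ⟨i, hiI, hiv⟩ := mem_nbhd.1 hvN
    exact (mem_filter.1 hiI).2 v (sdiff_subset hvA) hiv.symm
  have hcard : #(nbhd G I) + #(A \ I) ≤ #(nbhd G A) := by
    rw [← card_union_of_disjoint hdisj]
    exact card_le_card (union_subset (nbhd_mono hIA) hrest)
  have hA : #(A \ I) + #I = #A := card_sdiff_add_card_eq_card hIA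
  simp only [vuln]
  omega

lemma vuln_le_of_forall_isIndepF {c : ℤ} (hc : 0 ≤ c)
    (h : ∀ S : Finset V, S.Nonempty → IsIndepF G S → vuln G S ≤ c) (A : Finset V) :
    vuln G A ≤ c := by
  refine (vuln_le_vuln_filter_forall_not_adj A).trans ?_
  rcases (A.filter fun v ↦ ∀ u ∈ A, ¬ G.Adj u v).eq_empty_or_nonempty with hI | hI
  · rwa [hI, vuln_empty]
  · exact h _ hI (isIndepF_filter_forall_not_adj A)

end Vulnerability

section TwoVertexCover

lemma IsTwoVertexCover.isIndepF_filter_eq_zero [Fintype V] {G : SimpleGraph V} {u : V → ℕ}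
    (hu : IsTwoVertexCover G u) : IsIndepF G (univ.filter (u · = 0)) := by
  intro i hi j hj hij
  have := hu.2 i j hij
  simp only [mem_filter, mem_univ, true_and] at hi hj
  omega

variable [Fintype V] [DecidableEq V] {G : SimpleGraph V} [DecidableRel G.Adj]

variable (G) in
def twoCoverOf (S : Finset V) (i : V) : ℕ :=
  if i ∈ S then 0 else if i ∈ nbhd G S then 2 else 1

lemma IsIndepF.isTwoVertexCover_twoCoverOf {S : Finset V} (hS : IsIndepF G S) :
    IsTwoVertexCover G (twoCoverOf G S) := by
  refine ⟨fun i ↦ by unfold twoCoverOf; split_ifs <;> omega, fun i j hij ↦ ?_⟩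
  have hi : i ∈ S → j ∈ nbhd G S := fun h ↦ mem_nbhd.2 ⟨i, h, hij⟩
  have hj : j ∈ S → i ∈ nbhd G S := fun h ↦ mem_nbhd.2 ⟨j, h, hij.symm⟩
  have hij' : ¬(i ∈ S ∧ j ∈ S) := fun h ↦ hS i h.1 j h.2 hij
  unfold twoCoverOf
  split_ifs <;> simp_all

lemma IsIndepF.sum_twoCoverOf_add_card {S : Finset V} (hS : IsIndepF G S) :
    ∑ i, twoCoverOf G S i + #S = Fintype.card V + #(nbhd G S) := by
  have key : ∀ i, twoCoverOf G S i + (if i ∈ S then 1 else 0)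
      = 1 + (if i ∈ nbhd G S then 1 else 0) := fun i ↦ by
    have hiN : i ∈ S → i ∉ nbhd G S := fun h ↦ disjoint_left.1 hS.disjoint_nbhd h
    unfold twoCoverOf
    split_ifs <;> simp_all
  simpa only [sum_add_distrib, sum_boole, filter_mem_eq_inter, univ_inter, sum_const,
    card_univ, smul_eq_mul, mul_one, Nat.cast_id] using
    congrArg (fun f : V → ℕ ↦ ∑ i, f i) (funext key)

lemma IsTwoVertexCover.twoCoverOf_filter_eq_zero_le {u : V → ℕ} (hu : IsTwoVertexCover G u)
    (i : V) : twoCoverOf G (univ.filter (u · = 0)) i ≤ u i := by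
  unfold twoCoverOf
  split_ifs with hZ hN
  · exact Nat.zero_le _
  · obtain ⟨j, hj, hji⟩ := mem_nbhd.1 hN
    have := hu.2 j i hji
    simp only [mem_filter, mem_univ, true_and] at hj
    omega
  · simp only [mem_filter, mem_univ, true_and] at hZ
    omega

lemma IsTwoVertexCover.card_sub_vuln_filter_eq_zero_le_sum {u : V → ℕ}
    (hu : IsTwoVertexCover G u) :
    (Fintype.card V : ℤ) - vuln G (univ.filter (u · = 0)) ≤ ∑ i, u i := by
  have hsum := hu.isIndepF_filter_eq_zero.sum_twoCoverOf_add_card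
  have hle := sum_le_sum fun i (_ : i ∈ univ) ↦ hu.twoCoverOf_filter_eq_zero_le i
  simp only [vuln]
  omega

end TwoVertexCover

section TwoMatching

lemma finsum_mem_edgeSet_eq_sum {M : Type*} [AddCommMonoid M] {G : SimpleGraph V}
    [Fintype G.edgeSet] (w : Sym2 V → M) :
    ∑ᶠ e ∈ G.edgeSet, w e = ∑ e ∈ G.edgeFinset, w e := by
  rw [← finsum_mem_coe_finset, SimpleGraph.coe_edgeFinset]

variable [Fintype V] [DecidableEq V] {G : SimpleGraph V} [DecidableRel G.Adj]
  {M : Type*} [AddCommMonoid M]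

lemma finsum_mem_incidenceSet_eq_sum (w : Sym2 V → M) (v : V) :
    ∑ᶠ e ∈ G.incidenceSet v, w e = ∑ e ∈ G.incidenceFinset v, w e := by
  rw [← finsum_mem_coe_finset, SimpleGraph.coe_incidenceFinset]

lemma sum_sum_incidenceFinset (w : Sym2 V → M) (X : Finset V) :
    ∑ v ∈ X, ∑ e ∈ G.incidenceFinset v, w e = ∑ e ∈ G.edgeFinset, #{v ∈ X | v ∈ e} • w e := by
  simp_rw [SimpleGraph.incidenceFinset_eq_filter, sum_filter]
  rw [sum_comm]
  refine sum_congr rfl fun e _ ↦ ?_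
  rw [← sum_filter, sum_const]

lemma sum_sum_incidenceFinset_univ (w : Sym2 V → M) :
    ∑ v, ∑ e ∈ G.incidenceFinset v, w e = 2 • ∑ e ∈ G.edgeFinset, w e := by
  rw [sum_sum_incidenceFinset, smul_sum]
  refine sum_congr rfl fun e he ↦ ?_
  have hdiag := G.not_isDiag_of_mem_edgeSet (SimpleGraph.mem_edgeFinset.1 he)
  have : ({v ∈ univ | v ∈ e} : Finset V) = e.toFinset := by ext; simp [Sym2.mem_toFinset]
  rw [this, Sym2.card_toFinset_of_not_isDiag e hdiag]

lemma IsIndepF.card_filter_mem_le {S : Finset V} (hS : IsIndepF G S) {e : Sym2 V}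
    (he : e ∈ G.edgeSet) : #{v ∈ S | v ∈ e} ≤ #{v ∈ nbhd G S | v ∈ e} := by
  have hle : #{v ∈ S | v ∈ e} ≤ 1 := card_le_one.2 fun x hx y hy ↦ by
    by_contra hxy
    rw [mem_filter] at hx hy
    rw [(Sym2.mem_and_mem_iff hxy).1 ⟨hx.2, hy.2⟩, SimpleGraph.mem_edgeSet] at he
    exact hS x hx.1 y hy.1 he
  rcases (#{v ∈ S | v ∈ e}).eq_zero_or_pos with h0 | hpos
  · omega
  obtain ⟨x, hx⟩ := card_pos.1 hpos
  rw [mem_filter] at hx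
  have hxy : G.Adj x (Sym2.Mem.other hx.2) := by
    rw [← SimpleGraph.mem_edgeSet, Sym2.other_spec]; exact he
  have : Sym2.Mem.other hx.2 ∈ ({v ∈ nbhd G S | v ∈ e} : Finset V) :=
    mem_filter.2 ⟨mem_nbhd.2 ⟨x, hx.1, hxy⟩, Sym2.other_mem hx.2⟩
  exact hle.trans (card_pos.2 ⟨_, this⟩)

/-- Double counting: since every edge at `S` has its other end in `N(S)`, the weight at `S` is
at most the weight at `N(S)`. -/
lemma IsTwoMatching.sum_add_card_le {w : Sym2 V → ℕ} (hw : IsTwoMatching G w) {S : Finset V}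
    (hS : IsIndepF G S) : ∑ e ∈ G.edgeFinset, w e + #S ≤ Fintype.card V + #(nbhd G S) := by
  set d : V → ℕ := fun v ↦ ∑ e ∈ G.incidenceFinset v, w e
  have hd : ∀ v, d v ≤ 2 := fun v ↦ by
    simpa only [finsum_mem_incidenceSet_eq_sum] using hw.2 v
  have hSN : ∑ v ∈ S, d v ≤ ∑ v ∈ nbhd G S, d v := by
    simp only [d, sum_sum_incidenceFinset, smul_eq_mul]
    exact sum_le_sum fun e he ↦ Nat.mul_le_mul_right _ <|
      hS.card_filter_mem_le (SimpleGraph.mem_edgeFinset.1 he)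
  have hN : ∑ v ∈ nbhd G S, d v ≤ #(nbhd G S) • 2 := sum_le_card_nsmul _ _ _ fun v _ ↦ hd v
  have hSc : ∑ v ∈ Sᶜ, d v ≤ #Sᶜ • 2 := sum_le_card_nsmul _ _ _ fun v _ ↦ hd v
  have htotal : ∑ v ∈ S, d v + ∑ v ∈ Sᶜ, d v = 2 • ∑ e ∈ G.edgeFinset, w e :=
    (sum_add_sum_compl S d).trans (sum_sum_incidenceFinset_univ w)
  have hcard : #Sᶜ + #S = Fintype.card V := by rw [card_compl]; have := card_le_univ S; omega
  simp only [smul_eq_mul] at hN hSc htotal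
  omega

lemma isTwoMatching_of_forall_sum_le {w : Sym2 V → ℕ}
    (h : ∀ v, ∑ e ∈ G.incidenceFinset v, w e ≤ 2) : IsTwoMatching G w := by
  refine ⟨fun e he ↦ ?_, fun v ↦ by simpa only [finsum_mem_incidenceSet_eq_sum] using h v⟩
  have : e ∈ G.incidenceFinset e.out.1 := by
    rw [SimpleGraph.mem_incidenceFinset]; exact ⟨he, Sym2.out_fst_mem e⟩
  exact (single_le_sum (fun _ _ ↦ Nat.zero_le _) this).trans (h _)

/-- Sending one unit of weight along each edge `i g(i)`: a vertex `v` receives weight only from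
the edge it sends itself and from the at most one `i` with `g i = v`. -/
lemma exists_isTwoMatching_sum_eq_card {A : Finset V} {g : V → V} (hg : Set.InjOn g A)
    (hadj : ∀ i ∈ A, G.Adj i (g i)) :
    ∃ w : Sym2 V → ℕ, IsTwoMatching G w ∧ ∑ e ∈ G.edgeFinset, w e = #A := by
  refine ⟨fun e ↦ #{i ∈ A | s(i, g i) = e}, isTwoMatching_of_forall_sum_le fun v ↦ ?_, ?_⟩
  · rw [sum_card_fiberwise_eq_card_filter]
    have hsub : ({i ∈ A | s(i, g i) ∈ G.incidenceFinset v} : Finset V)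
        ⊆ insert v {i ∈ A | g i = v} := fun i hi ↦ by
      simp only [mem_filter, SimpleGraph.mem_incidenceFinset, SimpleGraph.incidenceSet,
        Set.mem_ofPred_eq, Sym2.mem_iff] at hi
      rcases hi.2.2 with rfl | hv
      · exact mem_insert_self _ _
      · exact mem_insert_of_mem (mem_filter.2 ⟨hi.1, hv.symm⟩)
    have hone : #{i ∈ A | g i = v} ≤ 1 := card_le_one.2 fun i hi j hj ↦ by
      rw [mem_filter] at hi hj
      exact hg hi.1 hj.1 (hi.2.trans hj.2.symm)
    exact (card_le_card hsub).trans ((card_insert_le _ _).trans (by omega))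
  · refine (card_eq_sum_card_fiberwise fun i hi ↦ ?_).symm
    rw [mem_coe, SimpleGraph.mem_edgeFinset]
    exact hadj i hi

/-- Hall's theorem with `D` extra vertices adjacent to everything. -/
lemma exists_injOn_adj_of_forall_vuln_le {D : ℕ} (h : ∀ A : Finset V, vuln G A ≤ D) :
    ∃ (A : Finset V) (g : V → V), Set.InjOn g A ∧ (∀ i ∈ A, G.Adj i (g i)) ∧
      Fintype.card V ≤ #A + D := by
  set t : V → Finset (V ⊕ Fin D) := fun i ↦ (G.neighborFinset i).disjSum univ
  have hall : ∀ A : Finset V, #A ≤ #(A.biUnion t) := fun A ↦ by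
    rcases A.eq_empty_or_nonempty with rfl | ⟨a, ha⟩
    · simp
    have hsub : (nbhd G A).disjSum (univ : Finset (Fin D)) ⊆ A.biUnion t := by
      rintro (j | k) hx
      · obtain ⟨i, hi, hij⟩ := mem_nbhd.1 (inl_mem_disjSum.1 hx)
        exact mem_biUnion.2 ⟨i, hi, inl_mem_disjSum.2 ((G.mem_neighborFinset i j).2 hij)⟩
      · exact mem_biUnion.2 ⟨a, ha, inr_mem_disjSum.2 (mem_univ k)⟩
    have hcard := card_le_card hsub
    rw [card_disjSum, card_univ, Fintype.card_fin] at hcard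
    have hA := h A
    simp only [vuln] at hA
    omega
  obtain ⟨f, hfinj, hft⟩ := (all_card_le_biUnion_card_iff_exists_injective t).1 hall
  set g : V → V := fun i ↦ Sum.elim id (fun _ ↦ i) (f i)
  set A : Finset V := {i | (f i).isLeft}
  have hfg : ∀ i ∈ A, f i = Sum.inl (g i) := fun i hi ↦ by
    simp only [A, mem_filter, mem_univ, true_and] at hi
    simp only [g]
    cases hfi : f i <;> simp_all
  refine ⟨A, g, fun i hi j hj hij ↦ hfinj ?_, fun i hi ↦ ?_, ?_⟩
  · rw [hfg i hi, hfg j hj, hij]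
  · have := hft i
    rw [hfg i hi] at this
    exact (G.mem_neighborFinset i _).1 (inl_mem_disjSum.1 this)
  · have hsub : Aᶜ.image f ⊆ (∅ : Finset V).disjSum (univ : Finset (Fin D)) := fun x hx ↦ by
      obtain ⟨i, hi, rfl⟩ := mem_image.1 hx
      simp only [A, mem_compl, mem_filter, mem_univ, true_and] at hi
      cases hfi : f i <;> simp_all
    have := card_le_card hsub
    rw [card_image_of_injective _ hfinj, card_disjSum, card_compl] at this
    simp only [card_empty, card_univ, Fintype.card_fin] at this
    have := card_le_univ A
    omega

end TwoMatching

theorem vulnerability_eq_card_sub_max2Matching_of_nonneg_general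
    [Fintype V] [DecidableEq V] (G : SimpleGraph V) [DecidableRel G.Adj]
    (nuBar : ℤ) (nu2 tau2 : ℕ)
    (hBar : IsGreatest {x : ℤ | ∃ S : Finset V, S.Nonempty ∧ IsIndepF G S ∧ vuln G S = x} nuBar)
    (hnonneg : 0 ≤ nuBar)
    (h2m : IsGreatest {n : ℕ |
      ∃ w : Sym2 V → ℕ, IsTwoMatching G w ∧ ∑ᶠ e ∈ G.edgeSet, w e = n} nu2)
    (h2c : IsLeast {n : ℕ | ∃ u : V → ℕ, IsTwoVertexCover G u ∧ ∑ i, u i = n} tau2) :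
    nuBar = (Fintype.card V : ℤ) - (nu2 : ℤ) ∧ nuBar = (Fintype.card V : ℤ) - (tau2 : ℤ) := by
  obtain ⟨S, -, hS, rfl⟩ := hBar.1
  have hvuln : ∀ A : Finset V, vuln G A ≤ vuln G S :=
    vuln_le_of_forall_isIndepF hnonneg fun T hT hTind ↦ hBar.2 ⟨T, hT, hTind, rfl⟩
  have hnu2_le : nu2 + #S ≤ Fintype.card V + #(nbhd G S) := by
    obtain ⟨w, hw, rfl⟩ := h2m.1
    simpa only [finsum_mem_edgeSet_eq_sum] using hw.sum_add_card_le hS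
  have hnu2_ge : (Fintype.card V : ℤ) - vuln G S ≤ nu2 := by
    obtain ⟨A, g, hg, hadj, hA⟩ := exists_injOn_adj_of_forall_vuln_le (D := (vuln G S).toNat)
      (by rwa [Int.toNat_of_nonneg hnonneg])
    obtain ⟨w, hw, hsize⟩ := exists_isTwoMatching_sum_eq_card hg hadj
    have := h2m.2 ⟨w, hw, (finsum_mem_edgeSet_eq_sum w).trans hsize⟩
    omega
  have htau2_le : tau2 + #S ≤ Fintype.card V + #(nbhd G S) :=
    (Nat.add_le_add_right (h2c.2 ⟨_, hS.isTwoVertexCover_twoCoverOf, rfl⟩) _).trans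
      hS.sum_twoCoverOf_add_card.le
  have htau2_ge : (Fintype.card V : ℤ) - vuln G S ≤ tau2 := by
    obtain ⟨u, hu, rfl⟩ := h2c.1
    exact (sub_le_sub_left (hvuln _) _).trans hu.card_sub_vuln_filter_eq_zero_le_sum
  simp only [vuln] at hnu2_ge htau2_ge ⊢
  omega

/-- For a finite simple undirected connected graph `G` with `ν̄_G ≥ 0`, one has
`ν̄_G = |V| - ν₂(G) = |V| - τ₂(G)`, where `ν₂(G)` is the maximum size of a 2-matching of `G`
and `τ₂(G)` is the minimum size of a 2-vertex cover of `G`. -/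
theorem vulnerability_eq_card_sub_max2Matching_of_nonneg
    [Fintype V] [DecidableEq V] (G : SimpleGraph V) [DecidableRel G.Adj]
    (hconn : G.Connected) (nuBar : ℤ) (nu2 tau2 : ℕ)
    (hBar : IsGreatest {x : ℤ | ∃ S : Finset V, S.Nonempty ∧ IsIndepF G S ∧ vuln G S = x} nuBar)
    (hnonneg : 0 ≤ nuBar)
    (h2m : IsGreatest {n : ℕ |
      ∃ w : Sym2 V → ℕ, IsTwoMatching G w ∧ ∑ᶠ e ∈ G.edgeSet, w e = n} nu2)
    (h2c : IsLeast {n : ℕ | ∃ u : V → ℕ, IsTwoVertexCover G u ∧ ∑ i, u i = n} tau2) :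
    nuBar = (Fintype.card V : ℤ) - (nu2 : ℤ) ∧ nuBar = (Fintype.card V : ℤ) - (tau2 : ℤ) :=
  vulnerability_eq_card_sub_max2Matching_of_nonneg_general G nuBar nu2 tau2 hBar hnonneg h2m h2c
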